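/- arXiv:1807.01562 — 2 statements merged into one kernel-verified Lean document; each statement's English description precedes it below -/
import Mathlib

section
/- Uniqueness of the solution to the self-consistent equations: Assume |Re z̃| ≤ 2−κ and |z̃| ≤ κ⁻¹ for a constant κ > 0. There exists a constant c > 0 such that if ζ + ‖g‖_∞ + |z − z̃| ≤ c, then the solution vector ((M_ζ^g)_i(z, z̃))_{i∈Z_N} of the self-consistent equations (M_i)⁻¹ = −z·1_{i∈[1,W]} − z̃·1_{i∉[1,W]} − g_i − Σ_j (s_ζ)_ij M_j is unique among vectors satisfying max_i |M_i − m_sc(z̃ + i0⁺)| ≤ c. -/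
open MeasureTheory ProbabilityTheory Matrix Finset
open scoped Classical

noncomputable section

namespace RBM

/-- Integer representative of `x : Fin N` in `(-N/2, N/2]`. -/
def rep {N : ℕ} (x : Fin N) : ℤ :=
  if 2 * x.val ≤ N then (x.val : ℤ) else (x.val : ℤ) - N

/-- Periodic distance `|x|` on `ℤ_N`, as a real number. -/
def zdist {N : ℕ} (x : Fin N) : ℝ := |(rep x : ℝ)|

/-- The block of indices `⟦1, W⟧` inside `ℤ_N`. -/
def inBlock {N : ℕ} (W : ℕ) (i : Fin N) : Prop := 1 ≤ i.val ∧ i.val ≤ W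

/-- Band variance profile `s_{ij} = f(i-j)` with band width `W`. -/
structure IsBandProfile {N : ℕ} (W : ℕ) (cs Cs : ℝ) (f : Fin N → ℝ) : Prop where
  nonneg : ∀ x, 0 ≤ f x
  symm : ∀ i j : Fin N, f (i - j) = f (j - i)
  sum_one : ∑ x, f x = 1
  lower : ∀ x, zdist x ≤ W → cs / W ≤ f x
  upper : ∀ x, f x ≤ if zdist x ≤ Cs * W then Cs / W else 0

/-- Entries of the variance matrix `S_ζ`. -/
def sZeta {N : ℕ} (W : ℕ) (ζ : ℝ) (f : Fin N → ℝ) (i j : Fin N) : ℝ :=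
  f (i - j) - (if inBlock W i ∧ inBlock W j then ζ * (1 + if i = j then 1 else 0) / W else 0)

/-- The random band matrix ensemble `H_ζ`: real symmetric, centered independent entries with
variance profile `S_ζ`, and all moments controlled by the standard deviation. -/
structure IsBandEnsemble {N : ℕ} (W : ℕ) (cs Cs : ℝ) (μmom : ℕ → ℝ) (ζ : ℝ)
    {Ω : Type*} [MeasurableSpace Ω] (P : Measure Ω)
    (f : Fin N → ℝ) (H : Ω → Matrix (Fin N) (Fin N) ℝ) : Prop where
  profile : IsBandProfile W cs Cs f
  meas : ∀ i j, Measurable fun ω => H ω i j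
  symm : ∀ ω, (H ω).IsSymm
  indep : iIndepFun
    (fun (p : {p : Fin N × Fin N // p.1 ≤ p.2}) ω => H ω p.1.1 p.1.2) P
  centered : ∀ i j, ∫ ω, H ω i j ∂P = 0
  variance : ∀ i j, ∫ ω, (H ω i j) ^ 2 ∂P = sZeta W ζ f i j
  moment : ∀ (p : ℕ) (i j), ∫ ω, |H ω i j| ^ p ∂P ≤ μmom p ^ p * sZeta W ζ f i j ^ ((p : ℝ) / 2)

/-- The deterministic diagonal matrix with the two spectral parameters. -/
def Zmat {N : ℕ} (W : ℕ) (z zt : ℂ) : Matrix (Fin N) (Fin N) ℂ :=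
  Matrix.diagonal fun i => if inBlock W i then z else zt

/-- The generalized resolvent `G_ζ^g(z, z̃)` of `H_ζ - diag g`. -/
def resolvent {N : ℕ} (W : ℕ) (g : Fin N → ℝ) (H : Matrix (Fin N) (Fin N) ℝ)
    (z zt : ℂ) : Matrix (Fin N) (Fin N) ℂ :=
  ((H - Matrix.diagonal g).map (fun x => (x : ℂ)) - Zmat W z zt)⁻¹

/-- The `T`-matrix `T_{ij} = ∑_k (S_ζ)_{ik} |G_{kj}|²`. -/
def Tmat {N : ℕ} (W : ℕ) (ζ : ℝ) (f : Fin N → ℝ)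
    (G : Matrix (Fin N) (Fin N) ℂ) (i j : Fin N) : ℝ :=
  ∑ k, sZeta W ζ f i k * ‖G k j‖ ^ 2

/-- The self-consistent equation for the vector `M`. -/
def IsSCSolution {N : ℕ} (W : ℕ) (ζ : ℝ) (f : Fin N → ℝ) (g : Fin N → ℝ)
    (z zt : ℂ) (M : Fin N → ℂ) : Prop :=
  ∀ i, (M i)⁻¹ =
    -(if inBlock W i then z else zt) - (g i : ℂ) - ∑ j, (sZeta W ζ f i j : ℂ) * M j

/-- Stieltjes transform of the semicircle law (the branch mapping `ℂ⁺` to `ℂ⁺`). -/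
def msc (z : ℂ) : ℂ := z * (-1 + (1 - 4 / z ^ 2) ^ ((1 : ℂ) / 2)) / 2

/-- Boundary value `m_sc(z̃ + i·0⁺)` for `z̃ ∈ ℂ⁺ ∪ ℝ`. -/
def mscB (z : ℂ) : ℂ :=
  if 0 < z.im then msc z
  else (-z + Complex.I * (Real.sqrt (4 - z.re ^ 2) : ℝ)) / 2

/-- The σ-algebra generated by the matrix minor obtained by removing row and column `k`. -/
def minorSigma {N : ℕ} {Ω : Type*} [MeasurableSpace Ω]
    (H : Ω → Matrix (Fin N) (Fin N) ℝ) (k : Fin N) : MeasurableSpace Ω :=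
  MeasurableSpace.comap
    (fun ω (p : {p : Fin N × Fin N // p.1 ≠ k ∧ p.2 ≠ k}) => H ω p.1.1 p.1.2) inferInstance

/-- The matrix `1 - M² S_ζ` (with `M²` the diagonal matrix with entries `M_i²`). -/
def oneSubM2S {N : ℕ} (W : ℕ) (ζ : ℝ) (f : Fin N → ℝ) (M : Fin N → ℂ) :
    Matrix (Fin N) (Fin N) ℂ :=
  1 - (Matrix.diagonal fun i => (M i) ^ 2) * (Matrix.of fun i j => ((sZeta W ζ f i j : ℝ) : ℂ))

/-- The real matrix `1 - S_ζ |M|²` (with `|M|²` the diagonal matrix with entries `|M_j|²`). -/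
def oneSubSM2 {N : ℕ} (W : ℕ) (ζ : ℝ) (f : Fin N → ℝ) (M : Fin N → ℂ) :
    Matrix (Fin N) (Fin N) ℝ :=
  1 - (Matrix.of fun i j => sZeta W ζ f i j) * (Matrix.diagonal fun j => ‖M j‖ ^ 2)

/-- The `ℓ∞ → ℓ∞` operator norm of a complex matrix (maximal absolute row sum). -/
def rowSumNorm {N : ℕ} (A : Matrix (Fin N) (Fin N) ℂ) : ℝ := ⨆ i, ∑ j, ‖A i j‖

end RBM

open RBM

/-! Write `v = M - M'`. Subtracting the two equations gives `v_i = M_i M'_i ∑_j s_ij v_j`, and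
the imaginary part of the equation gives `|M_i|² ∑_j s_ij Im M_j ≤ Im M_i`. By Cauchy–Schwarz
the linearised map is therefore a contraction in the weight `√(Im M_j Im M'_j)`, so at an index
maximising `|v_j| / √(Im M_j Im M'_j)` every inequality in
`|v_i| ≤ |M_i M'_i| ∑_j s_ij |v_j|` is an equality. Equality in the triangle inequality (with
`s_ii > 0`) aligns `v_i` with `∑_j s_ij v_j`, which forces `M_i M'_i > 0`. But `M_i M'_i` is
close to `m_sc²`, whose distance to `[0, ∞)` is at least `(Im m_sc)² ≥ κ³/18` in the bulk. -/

open ComplexConjugate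

theorem Complex.im_sq_le_norm_ofReal_sub_sq (m : ℂ) {r : ℝ} (hr : 0 ≤ r) :
    m.im ^ 2 ≤ ‖(r : ℂ) - m ^ 2‖ := by
  have key : (m.im ^ 2) ^ 2 ≤ ‖(r : ℂ) - m ^ 2‖ ^ 2 := by
    rw [Complex.sq_norm, Complex.normSq_apply]
    simp only [Complex.sub_re, Complex.sub_im, Complex.ofReal_re, Complex.ofReal_im, sq,
      Complex.mul_re, Complex.mul_im]
    rcases le_total (m.re * m.re) (m.im * m.im) with h | h <;>
      nlinarith [mul_nonneg (mul_self_nonneg m.re) (mul_self_nonneg m.im)]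
  exact (pow_le_pow_iff_left₀ (sq_nonneg _) (norm_nonneg _) two_ne_zero).mp key

theorem Complex.eq_norm_of_re_eq_norm {z : ℂ} (h : z.re = ‖z‖) : z = ‖z‖ := by
  have him : z.im = 0 := Complex.abs_re_eq_norm.mp (by rw [h, abs_norm])
  exact Complex.ext (by simp [h]) (by simp [him])

theorem Complex.conj_sum_mul_eq_of_norm_sum_eq {ι : Type*} [Fintype ι] {c : ι → ℂ}
    (h : ‖∑ j, c j‖ = ∑ j, ‖c j‖) (i : ι) :
    conj (∑ j, c j) * c i = ‖∑ j, c j‖ * ‖c i‖ := by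
  set S := ∑ j, c j
  have hle : ∀ j, (conj S * c j).re ≤ ‖S‖ * ‖c j‖ := fun j => by
    simpa using Complex.re_le_norm (conj S * c j)
  have hsum : ∑ j, (conj S * c j).re = ∑ j, ‖S‖ * ‖c j‖ := by
    rw [← Complex.re_sum, ← Finset.mul_sum, ← Finset.mul_sum, ← h, Complex.conj_mul']
    norm_cast
    ring
  have hi := (Finset.sum_eq_sum_iff_of_le fun j _ => hle j).mp hsum i (Finset.mem_univ i)
  rw [Complex.eq_norm_of_re_eq_norm (z := conj S * c i) (by simpa using hi), norm_mul,
    Complex.norm_conj, Complex.ofReal_mul]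

theorem Real.sum_mul_sqrt_mul_le {ι : Type*} [Fintype ι] {s a b : ι → ℝ}
    (hs : ∀ j, 0 ≤ s j) (ha : ∀ j, 0 ≤ a j) (hb : ∀ j, 0 ≤ b j) :
    ∑ j, s j * √(a j * b j) ≤ √(∑ j, s j * a j) * √(∑ j, s j * b j) := by
  have h := Real.sum_sqrt_mul_sqrt_le Finset.univ (fun j => mul_nonneg (hs j) (ha j))
    (fun j => mul_nonneg (hs j) (hb j))
  convert h using 2 with j
  rw [← Real.sqrt_mul (mul_nonneg (hs j) (ha j)),
    show s j * a j * (s j * b j) = s j ^ 2 * (a j * b j) by ring,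
    Real.sqrt_mul (sq_nonneg _), Real.sqrt_sq (hs j)]

theorem Complex.im_pos_of_norm_sub_le {x m : ℂ} {c : ℝ} (h : ‖x - m‖ ≤ c) (hc : c < m.im) :
    0 < x.im := by
  have := (abs_le.mp ((Complex.abs_im_le_norm (x - m)).trans h)).1
  rw [Complex.sub_im] at this
  linarith

theorem Complex.mul_ne_ofReal_of_norm_sub_le {m x y : ℂ} {c r : ℝ} (hm : ‖m‖ ≤ 1) (hc1 : c ≤ 1)
    (hx : ‖x - m‖ ≤ c) (hy : ‖y - m‖ ≤ c) (hc : 3 * c < m.im ^ 2) (hr : 0 ≤ r) :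
    x * y ≠ r := by
  intro h
  have hxn : ‖x‖ ≤ 2 := by linarith [norm_le_norm_add_norm_sub' x m]
  have hclose : ‖x * y - m ^ 2‖ ≤ 3 * c := by
    calc ‖x * y - m ^ 2‖ = ‖x * (y - m) + m * (x - m)‖ := by ring_nf
      _ ≤ ‖x‖ * ‖y - m‖ + ‖m‖ * ‖x - m‖ := by
          simpa only [norm_mul] using norm_add_le (x * (y - m)) (m * (x - m))
      _ ≤ 2 * c + 1 * c := by gcongr
      _ = 3 * c := by ring
  have hfar := Complex.im_sq_le_norm_ofReal_sub_sq m hr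
  rw [← h] at hfar
  linarith

section SelfConsistentEquation

variable {ι : Type*} [Fintype ι] {s : ι → ι → ℝ} {w M M' : ι → ℂ}

theorem normSq_mul_sum_im_le_im {i : ι} (hw : 0 ≤ (w i).im)
    (hM : (M i)⁻¹ = -w i - ∑ j, (s i j : ℂ) * M j) :
    Complex.normSq (M i) * ∑ j, s i j * (M j).im ≤ (M i).im := by
  have hinv : Complex.normSq (M i) * ((M i)⁻¹).im = -(M i).im := by
    rcases eq_or_ne (M i) 0 with h | h
    · simp [h]
    · rw [Complex.inv_im]
      field_simp [Complex.normSq_pos.mpr h |>.ne']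
  rw [hM] at hinv
  simp only [Complex.sub_im, Complex.neg_im, Complex.im_sum, Complex.im_ofReal_mul] at hinv
  nlinarith [Complex.normSq_nonneg (M i)]

theorem sub_eq_mul_mul_sum_sub {i : ι} (hM : (M i)⁻¹ = -w i - ∑ j, (s i j : ℂ) * M j)
    (hM' : (M' i)⁻¹ = -w i - ∑ j, (s i j : ℂ) * M' j) (h0 : M i ≠ 0) (h0' : M' i ≠ 0) :
    M i - M' i = M i * M' i * ∑ j, (s i j : ℂ) * (M j - M' j) := by
  have hsum : ∑ j, (s i j : ℂ) * (M j - M' j) = (M' i)⁻¹ - (M i)⁻¹ := by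
    rw [hM, hM']
    simp only [mul_sub, Finset.sum_sub_distrib]
    ring
  rw [hsum]
  field_simp

theorem norm_mul_norm_mul_sum_sqrt_im_le (hs : ∀ i j, 0 ≤ s i j) {i : ι} (hw : 0 ≤ (w i).im)
    (hM : (M i)⁻¹ = -w i - ∑ j, (s i j : ℂ) * M j)
    (hM' : (M' i)⁻¹ = -w i - ∑ j, (s i j : ℂ) * M' j)
    (hMim : ∀ j, 0 ≤ (M j).im) (hM'im : ∀ j, 0 ≤ (M' j).im) :
    ‖M i‖ * ‖M' i‖ * ∑ j, s i j * √((M j).im * (M' j).im) ≤ √((M i).im * (M' i).im) := by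
  set A := ∑ j, s i j * (M j).im
  set B := ∑ j, s i j * (M' j).im
  calc ‖M i‖ * ‖M' i‖ * ∑ j, s i j * √((M j).im * (M' j).im)
      ≤ ‖M i‖ * ‖M' i‖ * (√A * √B) := by
        gcongr
        exact Real.sum_mul_sqrt_mul_le (hs i) hMim hM'im
    _ = √(Complex.normSq (M i) * A) * √(Complex.normSq (M' i) * B) := by
        rw [← Complex.sq_norm, ← Complex.sq_norm, Real.sqrt_mul (sq_nonneg _),
          Real.sqrt_mul (sq_nonneg _), Real.sqrt_sq (norm_nonneg _), Real.sqrt_sq (norm_nonneg _)]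
        ring
    _ ≤ √(M i).im * √(M' i).im := by
        gcongr
        · exact normSq_mul_sum_im_le_im hw hM
        · exact normSq_mul_sum_im_le_im hw hM'
    _ = √((M i).im * (M' i).im) := (Real.sqrt_mul (hMim i) _).symm

theorem exists_norm_sum_eq_sum_norm (hs : ∀ i j, 0 ≤ s i j) (hw : ∀ i, 0 ≤ (w i).im)
    (hM : ∀ i, (M i)⁻¹ = -w i - ∑ j, (s i j : ℂ) * M j)
    (hM' : ∀ i, (M' i)⁻¹ = -w i - ∑ j, (s i j : ℂ) * M' j)
    (hMim : ∀ j, 0 < (M j).im) (hM'im : ∀ j, 0 < (M' j).im) (hne : M ≠ M') :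
    ∃ i, M i ≠ M' i ∧
      ‖∑ j, (s i j : ℂ) * (M j - M' j)‖ = ∑ j, ‖(s i j : ℂ) * (M j - M' j)‖ := by
  set ρ : ι → ℝ := fun j => √((M j).im * (M' j).im)
  have hρ : ∀ j, 0 < ρ j := fun j => Real.sqrt_pos.mpr (mul_pos (hMim j) (hM'im j))
  have hM0 : ∀ j, M j ≠ 0 := fun j h => (hMim j).ne' (by simp [h])
  have hM'0 : ∀ j, M' j ≠ 0 := fun j h => (hM'im j).ne' (by simp [h])
  obtain ⟨j₀, hj₀⟩ := Function.ne_iff.mp hne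
  have : Nonempty ι := ⟨j₀⟩
  obtain ⟨i, hi⟩ := Finite.exists_max fun j => ‖M j - M' j‖ / ρ j
  set U := ‖M i - M' i‖ / ρ i
  have hU : 0 < U :=
    (div_pos (norm_pos_iff.mpr (sub_ne_zero.mpr hj₀)) (hρ j₀)).trans_le (hi j₀)
  have hvi : ‖M i - M' i‖ = U * ρ i := (div_mul_cancel₀ _ (hρ i).ne').symm
  have hsum : ∑ j, ‖(s i j : ℂ) * (M j - M' j)‖ ≤ U * ∑ j, s i j * ρ j := by
    rw [Finset.mul_sum]
    refine Finset.sum_le_sum fun j _ => ?_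
    rw [norm_mul, Complex.norm_real, Real.norm_of_nonneg (hs i j), mul_left_comm]
    exact mul_le_mul_of_nonneg_left ((div_le_iff₀ (hρ j)).mp (hi j)) (hs i j)
  have hMM : 0 < ‖M i‖ * ‖M' i‖ := mul_pos (norm_pos_iff.mpr (hM0 i)) (norm_pos_iff.mpr (hM'0 i))
  have hvi0 : M i ≠ M' i := fun h => (mul_pos hU (hρ i)).ne' (by rw [← hvi, h, sub_self, norm_zero])
  refine ⟨i, hvi0, le_antisymm (norm_sum_le _ _) ?_⟩
  refine le_of_mul_le_mul_left ?_ hMM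
  calc ‖M i‖ * ‖M' i‖ * ∑ j, ‖(s i j : ℂ) * (M j - M' j)‖
      ≤ ‖M i‖ * ‖M' i‖ * (U * ∑ j, s i j * ρ j) := by gcongr
    _ = U * (‖M i‖ * ‖M' i‖ * ∑ j, s i j * ρ j) := by ring
    _ ≤ U * ρ i := by
        gcongr
        exact norm_mul_norm_mul_sum_sqrt_im_le hs (hw i) (hM i) (hM' i)
          (fun j => (hMim j).le) (fun j => (hM'im j).le)
    _ = ‖M i‖ * ‖M' i‖ * ‖∑ j, (s i j : ℂ) * (M j - M' j)‖ := by
        rw [← hvi, sub_eq_mul_mul_sum_sub (hM i) (hM' i) (hM0 i) (hM'0 i), norm_mul, norm_mul]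

theorem eq_of_forall_mul_ne_ofReal (hs : ∀ i j, 0 ≤ s i j) (hdiag : ∀ i, 0 < s i i)
    (hw : ∀ i, 0 ≤ (w i).im)
    (hM : ∀ i, (M i)⁻¹ = -w i - ∑ j, (s i j : ℂ) * M j)
    (hM' : ∀ i, (M' i)⁻¹ = -w i - ∑ j, (s i j : ℂ) * M' j)
    (hMim : ∀ j, 0 < (M j).im) (hM'im : ∀ j, 0 < (M' j).im)
    (hreal : ∀ i (r : ℝ), 0 ≤ r → M i * M' i ≠ r) : M = M' := by
  by_contra hne
  obtain ⟨i, hvi, heq⟩ := exists_norm_sum_eq_sum_norm hs hw hM hM' hMim hM'im hne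
  set S := ∑ j, (s i j : ℂ) * (M j - M' j)
  have hv : M i - M' i = M i * M' i * S :=
    sub_eq_mul_mul_sum_sub (hM i) (hM' i) (fun h => (hMim i).ne' (by simp [h]))
      (fun h => (hM'im i).ne' (by simp [h]))
  have hS : ‖S‖ ≠ 0 := by
    rw [norm_ne_zero_iff]
    rintro h
    rw [h, mul_zero, sub_eq_zero] at hv
    exact hvi hv
  have halign : conj S * (M i - M' i) = ‖S‖ * ‖M i - M' i‖ := by
    have h := Complex.conj_sum_mul_eq_of_norm_sum_eq heq i
    rw [norm_mul, Complex.norm_real, Real.norm_of_nonneg (hdiag i).le] at h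
    apply mul_left_cancel₀ (Complex.ofReal_ne_zero.mpr (hdiag i).ne')
    push_cast at h
    linear_combination h
  refine hreal i (‖M i - M' i‖ / ‖S‖) (by positivity) ?_
  have hconj : conj S * (M i - M' i) = M i * M' i * ‖S‖ ^ 2 := by
    rw [hv, mul_left_comm, Complex.conj_mul']
  rw [Complex.ofReal_div, eq_div_iff (Complex.ofReal_ne_zero.mpr hS)]
  apply mul_left_cancel₀ (Complex.ofReal_ne_zero.mpr hS)
  linear_combination halign - hconj

end SelfConsistentEquation

namespace RBM

theorem msc_mul_add_msc {z : ℂ} (hz : z ≠ 0) : msc z * (z + msc z) = -1 := by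
  have hs : ((1 - 4 / z ^ 2) ^ ((1 : ℂ) / 2)) ^ 2 = 1 - 4 / z ^ 2 := by
    rw [one_div]
    exact Complex.cpow_ofNat_inv_pow _ 2
  rw [msc]
  set s := (1 - 4 / z ^ 2) ^ ((1 : ℂ) / 2)
  have hs' : z ^ 2 * s ^ 2 = z ^ 2 - 4 := by rw [hs]; field_simp
  linear_combination hs' / 4

theorem norm_msc_le_norm_add_msc (z : ℂ) : ‖msc z‖ ≤ ‖z + msc z‖ := by
  have hre : 0 ≤ ((1 - 4 / z ^ 2) ^ ((1 : ℂ) / 2)).re := by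
    rw [one_div, Complex.cpow_inv_two_re]
    exact Real.sqrt_nonneg _
  set s := (1 - 4 / z ^ 2) ^ ((1 : ℂ) / 2)
  have hle : ‖-1 + s‖ ≤ ‖1 + s‖ := by
    rw [Complex.norm_def, Complex.norm_def]
    gcongr
    simp only [Complex.normSq_apply, Complex.add_re, Complex.add_im, Complex.neg_re,
      Complex.one_re, Complex.one_im, Complex.neg_im]
    nlinarith
  have hadd : z + msc z = z * (1 + s) / 2 := by rw [msc]; ring
  rw [hadd, msc, norm_div, norm_div, norm_mul, norm_mul]
  gcongr

theorem eq_neg_sub_inv_of_mul_add_eq {m z : ℂ} (h : m * (z + m) = -1) : z = -m - m⁻¹ := by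
  have hm : m ≠ 0 := by rintro rfl; simp at h
  field_simp
  linear_combination h

theorem re_eq_of_mul_add_eq {m z : ℂ} (h : m * (z + m) = -1) :
    z.re = -m.re - m.re / Complex.normSq m := by
  rw [eq_neg_sub_inv_of_mul_add_eq h, Complex.sub_re, Complex.neg_re, Complex.inv_re]

theorem im_eq_of_mul_add_eq {m z : ℂ} (h : m * (z + m) = -1) :
    z.im = -m.im + m.im / Complex.normSq m := by
  rw [eq_neg_sub_inv_of_mul_add_eq h, Complex.sub_im, Complex.neg_im, Complex.inv_im]
  ring

theorem im_pos_of_mul_add_eq {m z : ℂ} (h : m * (z + m) = -1) (hm : ‖m‖ ≤ 1)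
    (hz : 0 < z.im) : 0 < m.im := by
  have hm0 : m ≠ 0 := by rintro rfl; simp at h
  have hr : 0 < Complex.normSq m := Complex.normSq_pos.mpr hm0
  have hr1 : Complex.normSq m ≤ 1 := by
    rw [← Complex.sq_norm]; nlinarith [norm_nonneg m]
  have him := im_eq_of_mul_add_eq h
  rw [div_eq_mul_inv] at him
  have hinv : 1 ≤ (Complex.normSq m)⁻¹ := one_le_inv₀ hr |>.mpr hr1
  nlinarith

theorem le_im_sq_of_mul_add_eq {m z : ℂ} {κ : ℝ} (hκ : 0 < κ) (h : m * (z + m) = -1)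
    (hm : ‖m‖ ≤ 1) (hre : |z.re| ≤ 2 - κ) (habs : ‖z‖ ≤ κ⁻¹) : κ ^ 3 / 18 ≤ m.im ^ 2 := by
  have hκ2 : κ ≤ 2 := by linarith [abs_nonneg z.re]
  have hm0 : m ≠ 0 := by rintro rfl; simp at h
  set r := Complex.normSq m with hr_def
  have hr : 0 < r := Complex.normSq_pos.mpr hm0
  have hr_eq : r = m.re ^ 2 + m.im ^ 2 := by rw [hr_def, Complex.normSq_apply]; ring
  have hr_lb : κ ^ 2 / 9 ≤ r := by
    have hprod : ‖m‖ * ‖z + m‖ = 1 := by rw [← norm_mul, h, norm_neg, norm_one]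
    have hzm : ‖z + m‖ ≤ κ⁻¹ + 1 := (norm_add_le _ _).trans (add_le_add habs hm)
    have h1 : 1 ≤ ‖m‖ * (κ⁻¹ + 1) :=
      hprod.symm.le.trans (mul_le_mul_of_nonneg_left hzm (norm_nonneg m))
    have h2 : κ / 3 ≤ ‖m‖ := by
      have : 1 * κ ≤ ‖m‖ * (1 + κ) := by
        calc 1 * κ ≤ ‖m‖ * (κ⁻¹ + 1) * κ := by gcongr
          _ = ‖m‖ * (1 + κ) := by field_simp
      nlinarith [norm_nonneg m]
    rw [hr_def, ← Complex.sq_norm]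
    nlinarith
  have hre_bound : |m.re| * (1 + r) ≤ (2 - κ) * r := by
    have hz : z.re = -(m.re * (1 + r) / r) := by
      rw [re_eq_of_mul_add_eq h, ← hr_def]
      field_simp
      ring
    rw [hz, abs_neg, abs_div, abs_mul, abs_of_pos hr,
      abs_of_pos (by linarith : (0 : ℝ) < 1 + r), div_le_iff₀ hr] at hre
    exact hre
  have hre_sq : 4 * m.re ^ 2 ≤ (2 - κ) ^ 2 * r := by
    have h1 : m.re ^ 2 * (1 + r) ^ 2 ≤ (2 - κ) ^ 2 * r ^ 2 := by
      rw [← sq_abs m.re, ← mul_pow, ← mul_pow]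
      exact pow_le_pow_left₀ (by positivity) hre_bound 2
    nlinarith [sq_nonneg (1 - r), sq_nonneg m.re]
  -- `Im² m = r - Re² m ≥ r κ (4 - κ) / 4 ≥ (κ² / 9) (κ / 2)`
  nlinarith [mul_le_mul_of_nonneg_left hr_lb (by linarith : (0 : ℝ) ≤ 2 - κ)]

theorem mscB_spec {z : ℂ} (hz : 0 ≤ z.im) (hre : |z.re| ≤ 2) :
    mscB z * (z + mscB z) = -1 ∧ ‖mscB z‖ ≤ 1 ∧ 0 ≤ (mscB z).im := by
  by_cases hpos : 0 < z.im
  · have hz0 : z ≠ 0 := by rintro rfl; simp at hpos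
    have hquad := msc_mul_add_msc hz0
    have hm1 : ‖msc z‖ ≤ 1 := by
      have := norm_msc_le_norm_add_msc z
      have hprod : ‖msc z‖ * ‖z + msc z‖ = 1 := by rw [← norm_mul, hquad, norm_neg, norm_one]
      nlinarith [norm_nonneg (msc z)]
    rw [mscB, if_pos hpos]
    exact ⟨hquad, hm1, (im_pos_of_mul_add_eq hquad hm1 hpos).le⟩
  · have hzim : z.im = 0 := by linarith
    have hz : z = z.re := Complex.ext rfl (by simp [hzim])
    set t := √(4 - z.re ^ 2)
    have ht : t ^ 2 = 4 - z.re ^ 2 :=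
      Real.sq_sqrt (by nlinarith [sq_abs z.re, abs_nonneg z.re])
    rw [mscB, if_neg hpos]
    have hre' : ((-z + Complex.I * t) / 2).re = -z.re / 2 := by simp
    have him' : ((-z + Complex.I * t) / 2).im = t / 2 := by simp [hzim]
    refine ⟨?_, ?_, ?_⟩
    · have htC : (t : ℂ) ^ 2 = 4 - (z.re : ℂ) ^ 2 := by exact_mod_cast ht
      rw [hz]
      simp only [Complex.ofReal_re]
      linear_combination (t : ℂ) ^ 2 / 4 * Complex.I_sq - htC / 4
    · rw [Complex.norm_def, Real.sqrt_le_one, Complex.normSq_apply, hre', him']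
      nlinarith
    · rw [him']
      positivity

theorem zdist_sub_le_of_inBlock {N W : ℕ} {i j : Fin N} (hi : inBlock W i) (hj : inBlock W j) :
    zdist (i - j) ≤ W := by
  obtain ⟨hi1, hi2⟩ := hi
  obtain ⟨hj1, hj2⟩ := hj
  have key : -(W : ℤ) ≤ rep (i - j) ∧ rep (i - j) ≤ W := by
    unfold rep
    rcases le_or_gt j i with h | h
    · rw [Fin.coe_sub_iff_le.mpr h]
      split_ifs <;> omega
    · rw [Fin.coe_sub_iff_lt.mpr h]
      split_ifs <;> omega
  exact abs_le.mpr ⟨by exact_mod_cast key.1, by exact_mod_cast key.2⟩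

theorem zdist_sub_self {N : ℕ} (i : Fin N) : zdist (i - i) = 0 := by
  simp [zdist, rep, Fin.coe_sub_iff_le.mpr le_rfl]

variable {N W : ℕ} {cs Cs ζ : ℝ} {f : Fin N → ℝ}

theorem sZeta_nonneg (hf : IsBandProfile W cs Cs f) (hζ : 0 ≤ ζ) (hζcs : 2 * ζ ≤ cs)
    (i j : Fin N) : 0 ≤ sZeta W ζ f i j := by
  unfold sZeta
  by_cases hb : inBlock W i ∧ inBlock W j
  · rw [if_pos hb]
    have hlow := hf.lower _ (zdist_sub_le_of_inBlock hb.1 hb.2)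
    have hζ2 : ζ * (1 + if i = j then 1 else 0) ≤ cs := by split_ifs <;> linarith
    have : ζ * (1 + if i = j then 1 else 0) / W ≤ cs / W := by gcongr
    linarith
  · rw [if_neg hb, sub_zero]
    exact hf.nonneg _

theorem sZeta_self_pos (hf : IsBandProfile W cs Cs f) (hW : 0 < W) (hζ : 0 ≤ ζ)
    (hζcs : 2 * ζ < cs) (i : Fin N) : 0 < sZeta W ζ f i i := by
  have hlow : cs / W ≤ f (i - i) := hf.lower _ (by rw [zdist_sub_self]; positivity)
  have hsmall : ζ * (1 + 1) / W < cs / W := by gcongr; linarith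
  have hpos : 0 < cs / W := hsmall.trans_le' (by positivity)
  rw [sZeta, if_pos (rfl : i = i)]
  split_ifs <;> linarith

end RBM

theorem sc_uniqueness_general (cs Cs κ : ℝ) (hcs : 0 < cs) (hκ : 0 < κ) :
    ∃ c > 0, ∀ (N W : ℕ), 0 < W →
    ∀ f : Fin N → ℝ, IsBandProfile W cs Cs f →
    ∀ (ζ : ℝ) (g : Fin N → ℝ) (z zt : ℂ),
    0 ≤ ζ → 0 ≤ z.im → 0 ≤ zt.im →
    |zt.re| ≤ 2 - κ → ‖zt‖ ≤ κ⁻¹ →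
    ζ + (⨆ i, |g i|) + ‖z - zt‖ ≤ c →
    ∀ M M' : Fin N → ℂ,
    IsSCSolution W ζ f g z zt M → (∀ i, ‖M i - mscB zt‖ ≤ c) →
    IsSCSolution W ζ f g z zt M' → (∀ i, ‖M' i - mscB zt‖ ≤ c) →
    M = M' := by
  refine ⟨min (cs / 4) (κ ^ 3 / 90), by positivity, ?_⟩
  intro N W hW f hf ζ g z zt hζ hzim hztim hre habs hsmall M M' hM hMc hM' hM'c
  set c := min (cs / 4) (κ ^ 3 / 90)
  have hζc : ζ ≤ c := by
    linarith [Real.iSup_nonneg fun i => abs_nonneg (g i), norm_nonneg (z - zt)]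
  have hκ2 : κ ≤ 2 := by linarith [abs_nonneg zt.re]
  obtain ⟨hquad, hm1, hmim⟩ := mscB_spec hztim (by linarith)
  have hc : 3 * c < (mscB zt).im ^ 2 := by
    have := le_im_sq_of_mul_add_eq hκ hquad hm1 hre habs
    nlinarith [min_le_right (cs / 4) (κ ^ 3 / 90), pow_pos hκ 3]
  have hcm : c < (mscB zt).im := by
    nlinarith [(Complex.im_le_norm (mscB zt)).trans hm1, hζ.trans hζc]
  have hc1 : c ≤ 1 := by
    nlinarith [min_le_right (cs / 4) (κ ^ 3 / 90), pow_le_pow_left₀ hκ.le hκ2 3]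
  have hζcs : 2 * ζ < cs := by linarith [min_le_left (cs / 4) (κ ^ 3 / 90)]
  have hw : ∀ i, 0 ≤ ((if inBlock W i then z else zt) + g i).im := by
    intro i
    split_ifs <;> simpa
  refine eq_of_forall_mul_ne_ofReal (sZeta_nonneg hf hζ hζcs.le) (sZeta_self_pos hf hW hζ hζcs)
    hw (fun i => ?_) (fun i => ?_) (fun i => Complex.im_pos_of_norm_sub_le (hMc i) hcm)
    (fun i => Complex.im_pos_of_norm_sub_le (hM'c i) hcm)
    (fun i r hr => Complex.mul_ne_ofReal_of_norm_sub_le hm1 hc1 (hMc i) (hM'c i) hc hr)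
  · rw [hM i]; ring
  · rw [hM' i]; ring

/-- **Uniqueness of the solution to the self-consistent equations** (Lemma 1.3, uniqueness
part): if `ζ + ‖g‖_∞ + |z - z̃| ≤ c`, then the solution of the self-consistent equations is
unique among vectors with `max_i |M_i - m_sc(z̃ + i0⁺)| ≤ c`. -/
theorem sc_uniqueness (cs Cs κ : ℝ) (hcs : 0 < cs) (hCs : 0 < Cs) (hκ : 0 < κ) :
    ∃ c > 0, ∀ (N W : ℕ), 0 < W →
    ∀ f : Fin N → ℝ, IsBandProfile W cs Cs f →
    ∀ (ζ : ℝ) (g : Fin N → ℝ) (z zt : ℂ),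
    0 ≤ ζ → 0 ≤ z.im → 0 ≤ zt.im →
    |zt.re| ≤ 2 - κ → ‖zt‖ ≤ κ⁻¹ →
    ζ + (⨆ i, |g i|) + ‖z - zt‖ ≤ c →
    ∀ M M' : Fin N → ℂ,
    IsSCSolution W ζ f g z zt M → (∀ i, ‖M i - mscB zt‖ ≤ c) →
    IsSCSolution W ζ f g z zt M' → (∀ i, ‖M' i - mscB zt‖ ≤ c) →
    M = M' :=
  sc_uniqueness_general cs Cs κ hcs hκ
end
end

section
/- Spectral gap for the band Dirichlet form: Let T := [−(log N)⁴W, (log N)⁴W] ∩ Z and let s_ij satisfy the band variance conditions. Then there is a constant c > 0 such that for every u ∈ L²(T) with ‖u‖₂ = 1 and u orthogonal to the constant vector (1, 1, …, 1), one has (1/4) Σ_{i,j ∈ T} s_ij (u_i − u_j)² ≥ c (log N)^{−13}. -/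
open MeasureTheory ProbabilityTheory Matrix Finset
open scoped Classical

noncomputable section

open RBM

/-!
Relabel `𝕋` as `{0, …, n - 1}` and cut it into consecutive blocks of length `h ≈ W / 3`, so that
points in the same or in adjacent blocks are at distance at most `W`, where `s_ij ≥ c_s / W`.
Split `u` into its block means and the fluctuations around them. The fluctuations are controlled
by the energy inside blocks (variance identity), the difference of two consecutive means by the
energy between the two blocks (Cauchy–Schwarz), and the spread of all means by telescoping
along the `≈ n / h` blocks. Together with `∑ u = 0` this gives
`W³ ‖u‖² ≤ 27 n² ∑_{|x - y| ≤ W} (u_x - u_y)²`, a gap of order `W² / n² ≳ (log N)⁻⁸`.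
-/

theorem sum_sum_mul_mul_sq_sub {α R : Type*} [CommRing R] (s : Finset α) (w g : α → R) :
    ∑ x ∈ s, ∑ y ∈ s, w x * w y * (g x - g y) ^ 2
      = 2 * (∑ x ∈ s, w x) * ∑ x ∈ s, w x * g x ^ 2 - 2 * (∑ x ∈ s, w x * g x) ^ 2 := by
  have hrow : ∀ x ∈ s, ∑ y ∈ s, w x * w y * (g x - g y) ^ 2
      = w x * g x ^ 2 * ∑ y ∈ s, w y - 2 * (w x * g x) * ∑ y ∈ s, w y * g y
        + w x * ∑ y ∈ s, w y * g y ^ 2 := by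
    intro x _
    simp only [mul_sum, ← sum_sub_distrib, ← sum_add_distrib]
    exact sum_congr rfl fun y _ => by ring
  rw [sum_congr rfl hrow]
  simp only [sum_add_distrib, sum_sub_distrib, ← sum_mul, ← mul_sum]
  ring

theorem sum_sq_eq_card_mul_sq_mean_add {α : Type*} (s : Finset α) (hs : s.Nonempty) (U : α → ℝ) :
    ∑ x ∈ s, U x ^ 2
      = #s * ((∑ x ∈ s, U x) / #s) ^ 2 + (∑ x ∈ s, ∑ y ∈ s, (U x - U y) ^ 2) / (2 * #s) := by
  have hcard : (#s : ℝ) ≠ 0 := by exact_mod_cast hs.card_ne_zero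
  have h := sum_sum_mul_mul_sq_sub s (fun _ => (1 : ℝ)) U
  simp only [one_mul, sum_const, nsmul_eq_mul, mul_one] at h
  rw [h]
  field_simp
  ring

theorem sq_mean_sub_mean_le {α : Type*} (A B : Finset α) (hA : A.Nonempty) (hB : B.Nonempty)
    (U : α → ℝ) :
    ((∑ x ∈ A, U x) / #A - (∑ y ∈ B, U y) / #B) ^ 2
      ≤ (∑ x ∈ A, ∑ y ∈ B, (U x - U y) ^ 2) / (#A * #B) := by
  have hA' : (0 : ℝ) < #A := by exact_mod_cast hA.card_pos
  have hB' : (0 : ℝ) < #B := by exact_mod_cast hB.card_pos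
  have hdiff : (∑ x ∈ A, U x) / #A - (∑ y ∈ B, U y) / #B
      = (∑ x ∈ A, ∑ y ∈ B, (U x - U y)) / (#A * #B) := by
    simp only [sum_sub_distrib, sum_const, nsmul_eq_mul, ← mul_sum]
    field_simp
  have hCS := sq_sum_le_card_mul_sum_sq (s := A ×ˢ B) (f := fun p => U p.1 - U p.2)
  simp only [card_product, Nat.cast_mul, sum_product] at hCS
  rw [hdiff, div_pow, div_le_div_iff₀ (by positivity) (by positivity)]
  calc (∑ x ∈ A, ∑ y ∈ B, (U x - U y)) ^ 2 * (#A * #B)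
      ≤ (#A * #B * ∑ x ∈ A, ∑ y ∈ B, (U x - U y) ^ 2) * (#A * #B) := by gcongr
    _ = _ := by ring

theorem two_mul_sum_mul_sq_le_of_sum_mul_eq_zero {α : Type*} (s : Finset α) (w v : α → ℝ)
    (hw : ∀ b ∈ s, 0 ≤ w b) (hv : ∑ b ∈ s, w b * v b = 0) (D : ℝ)
    (hD : ∀ b ∈ s, ∀ b' ∈ s, (v b - v b') ^ 2 ≤ D) :
    2 * ∑ b ∈ s, w b * v b ^ 2 ≤ (∑ b ∈ s, w b) * D := by
  rcases (sum_nonneg hw).eq_or_lt with hzero | hpos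
  · have hw0 : ∀ b ∈ s, w b = 0 := (sum_eq_zero_iff_of_nonneg hw).mp hzero.symm
    have hsq : ∑ b ∈ s, w b * v b ^ 2 = 0 := sum_eq_zero fun b hb => by rw [hw0 b hb, zero_mul]
    simp [hsq, ← hzero]
  have h := sum_sum_mul_mul_sq_sub s w v
  rw [hv] at h
  have hle : ∑ b ∈ s, ∑ b' ∈ s, w b * w b' * (v b - v b') ^ 2
      ≤ ∑ b ∈ s, ∑ b' ∈ s, w b * w b' * D := by
    gcongr with b hb b' hb'
    · exact mul_nonneg (hw b hb) (hw b' hb')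
    · exact hD b hb b' hb'
  simp only [← sum_mul, ← mul_sum] at hle
  nlinarith

theorem sq_sub_le_mul_sum_of_sq_sub_succ_le (v c : ℕ → ℝ) {m : ℕ} (hc : ∀ k, 0 ≤ c k)
    (hstep : ∀ k, k + 1 < m → (v (k + 1) - v k) ^ 2 ≤ c k) :
    ∀ a < m, ∀ b < m, (v a - v b) ^ 2 ≤ m * ∑ k ∈ range m, c k := by
  suffices h : ∀ a b, a ≤ b → b < m → (v b - v a) ^ 2 ≤ m * ∑ k ∈ range m, c k by
    intro a ha b hb
    rcases le_total a b with hab | hba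
    · rw [← neg_sub, neg_sq]; exact h a b hab hb
    · exact h b a hba ha
  intro a b hab hb
  calc (v b - v a) ^ 2 = (∑ k ∈ Ico a b, (v (k + 1) - v k)) ^ 2 := by rw [sum_Ico_sub v hab]
    _ ≤ #(Ico a b) * ∑ k ∈ Ico a b, (v (k + 1) - v k) ^ 2 := sq_sum_le_card_mul_sum_sq
    _ ≤ m * ∑ k ∈ range m, c k := by
        gcongr
        · rw [Nat.card_Ico]; omega
        calc ∑ k ∈ Ico a b, (v (k + 1) - v k) ^ 2 ≤ ∑ k ∈ Ico a b, c k :=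
              sum_le_sum fun k hk => hstep k (by rw [mem_Ico] at hk; omega)
          _ ≤ ∑ k ∈ range m, c k :=
              sum_le_sum_of_subset_of_nonneg
                (fun k hk => by simp only [mem_Ico, mem_range] at hk ⊢; omega) fun k _ _ => hc k

section Blocks

variable {α : Type*} (s : Finset α) (blk : α → ℕ) {m : ℕ} (hblk : ∀ x ∈ s, blk x < m)

def blockMean (U : α → ℝ) (b : ℕ) : ℝ :=
  (∑ x ∈ s with blk x = b, U x) / #{x ∈ s | blk x = b}

include hblk

theorem sum_sum_filter_adjacent_eq {M : Type*} [AddCommMonoid M] (g : α → α → M) :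
    ∑ x ∈ s, ∑ y ∈ s with blk y = blk x ∨ blk y = blk x + 1, g x y
      = ∑ b ∈ range m, ∑ x ∈ s with blk x = b,
          (∑ y ∈ s with blk y = b, g x y + ∑ y ∈ s with blk y = b + 1, g x y) := by
  have hfiber : ∀ b ∈ range m, ∑ x ∈ s with blk x = b,
      (∑ y ∈ s with blk y = b, g x y + ∑ y ∈ s with blk y = b + 1, g x y)
      = ∑ x ∈ s with blk x = b,
          (∑ y ∈ s with blk y = blk x, g x y + ∑ y ∈ s with blk y = blk x + 1, g x y) :=
    fun b _ => sum_congr rfl fun x hx => by rw [(mem_filter.mp hx).2]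
  rw [sum_congr rfl hfiber, sum_fiberwise_of_maps_to fun x hx => mem_range.mpr (hblk x hx)]
  refine sum_congr rfl fun x _ => ?_
  rw [filter_or, sum_union (disjoint_filter.mpr fun y _ h1 h2 => by omega)]

variable {h : ℕ} (hh : 0 < h) (hcard : ∀ b < m, h ≤ #{x ∈ s | blk x = b}) (U : α → ℝ)
include hh hcard

theorem sum_sq_le_sum_card_mul_sq_blockMean_add :
    ∑ x ∈ s, U x ^ 2
      ≤ ∑ b ∈ range m, #{x ∈ s | blk x = b} * blockMean s blk U b ^ 2
        + (∑ b ∈ range m, ∑ x ∈ s with blk x = b, ∑ y ∈ s with blk y = b, (U x - U y) ^ 2)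
          / (2 * h) := by
  rw [← sum_fiberwise_of_maps_to fun x hx => mem_range.mpr (hblk x hx), sum_div,
    ← sum_add_distrib]
  refine sum_le_sum fun b hb => ?_
  have hne : {x ∈ s | blk x = b}.Nonempty := card_pos.mp (hh.trans_le (hcard b (mem_range.mp hb)))
  rw [sum_sq_eq_card_mul_sq_mean_add _ hne, blockMean]
  gcongr
  exact_mod_cast hcard b (mem_range.mp hb)

theorem two_mul_sum_card_mul_sq_blockMean_le (hU : ∑ x ∈ s, U x = 0) :
    2 * ∑ b ∈ range m, #{x ∈ s | blk x = b} * blockMean s blk U b ^ 2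
      ≤ #s * (m * ∑ b ∈ range m,
          (∑ x ∈ s with blk x = b, ∑ y ∈ s with blk y = b + 1, (U x - U y) ^ 2) / h ^ 2) := by
  have hmaps : ∀ x ∈ s, blk x ∈ range m := fun x hx => mem_range.mpr (hblk x hx)
  have hne : ∀ b < m, {x ∈ s | blk x = b}.Nonempty :=
    fun b hb => card_pos.mp (hh.trans_le (hcard b hb))
  have hmean : ∑ b ∈ range m, (#{x ∈ s | blk x = b} : ℝ) * blockMean s blk U b = 0 := by
    rw [← hU, ← sum_fiberwise_of_maps_to hmaps]
    exact sum_congr rfl fun b hb =>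
      mul_div_cancel₀ _ (by exact_mod_cast (hne b (mem_range.mp hb)).card_ne_zero)
  have hstep : ∀ k, k + 1 < m → (blockMean s blk U (k + 1) - blockMean s blk U k) ^ 2
      ≤ (∑ x ∈ s with blk x = k, ∑ y ∈ s with blk y = k + 1, (U x - U y) ^ 2) / h ^ 2 := by
    intro k hk
    rw [← neg_sub, neg_sq]
    refine (sq_mean_sub_mean_le _ _ (hne k (by omega)) (hne (k + 1) hk) U).trans ?_
    gcongr
    rw [sq]
    gcongr <;> exact_mod_cast hcard _ (by omega)
  have hspread := sq_sub_le_mul_sum_of_sq_sub_succ_le _ _ (fun k => by positivity) hstep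
  have hweighted := two_mul_sum_mul_sq_le_of_sum_mul_eq_zero (range m) _ _
    (fun _ _ => by positivity) hmean _
    fun a ha b hb => hspread a (mem_range.mp ha) b (mem_range.mp hb)
  rwa [← Nat.cast_sum, ← card_eq_sum_card_fiberwise hmaps] at hweighted

omit hh in
theorem sq_mul_sum_sq_le_of_blocks (hU : ∑ x ∈ s, U x = 0) :
    (h : ℝ) ^ 2 * ∑ x ∈ s, U x ^ 2
      ≤ #s * m * ∑ x ∈ s, ∑ y ∈ s with blk y = blk x ∨ blk y = blk x + 1, (U x - U y) ^ 2 := by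
  rcases Nat.eq_zero_or_pos h with rfl | hh
  · rw [Nat.cast_zero, zero_pow two_ne_zero, zero_mul]
    positivity
  rcases Nat.eq_zero_or_pos m with rfl | hm
  · simp [eq_empty_iff_forall_notMem.mpr fun x hx => Nat.not_lt_zero _ (hblk x hx)]
  set P := ∑ b ∈ range m, ∑ x ∈ s with blk x = b, ∑ y ∈ s with blk y = b, (U x - U y) ^ 2
  set C := ∑ b ∈ range m, ∑ x ∈ s with blk x = b, ∑ y ∈ s with blk y = b + 1, (U x - U y) ^ 2
  have hwithin := sum_sq_le_sum_card_mul_sq_blockMean_add s blk hblk hh hcard U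
  have hbetween := two_mul_sum_card_mul_sq_blockMean_le s blk hblk hh hcard U hU
  rw [← sum_div] at hbetween
  have hsplit : ∑ x ∈ s, ∑ y ∈ s with blk y = blk x ∨ blk y = blk x + 1, (U x - U y) ^ 2
      = P + C := by
    rw [sum_sum_filter_adjacent_eq s blk hblk, ← sum_add_distrib]
    exact sum_congr rfl fun b _ => sum_add_distrib
  have hhsm : (h : ℝ) ≤ #s * m := by
    have : h ≤ #s * m :=
      (hcard 0 hm).trans ((card_filter_le _ _).trans (Nat.le_mul_of_pos_right _ hm))
    exact_mod_cast this
  have hP : 0 ≤ P := by positivity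
  have hC : 0 ≤ C := by positivity
  have hhR : (0 : ℝ) < h := by exact_mod_cast hh
  rw [hsplit]
  calc (h : ℝ) ^ 2 * ∑ x ∈ s, U x ^ 2
      ≤ h ^ 2 * (#s * (m * (C / h ^ 2)) / 2 + P / (2 * h)) := by gcongr; linarith
    _ = (#s * m * C + h * P) / 2 := by field_simp
    _ ≤ #s * m * (P + C) := by nlinarith

end Blocks

-- Blocks `[b h, (b + 1) h)`, the last one absorbing the remainder `n % h`, so that every block
-- has between `h` and `2 h - 1` points.
theorem min_div_mul_le_and_add_two_le {n h x : ℕ} (hh : 0 < h) (hhn : h ≤ n) (hx : x < n) :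
    min (x / h) (n / h - 1) * h ≤ x ∧ x + 2 ≤ min (x / h) (n / h - 1) * h + 2 * h := by
  have hxq := Nat.div_mul_le_self x h
  have hxr := Nat.lt_div_mul_add (a := x) hh
  have hnr := Nat.lt_div_mul_add (a := n) hh
  have hqn : x / h ≤ n / h := Nat.div_le_div_right hx.le
  have hm : (n / h - 1) * h = n / h * h - h := Nat.sub_one_mul _ _
  have hmh : h ≤ n / h * h := Nat.le_mul_of_pos_left h (Nat.div_pos hhn hh)
  rcases le_total (x / h) (n / h - 1) with hq | hq
  · rw [min_eq_left hq]; omega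
  · rw [min_eq_right hq]
    have := Nat.mul_le_mul_right h hq
    omega

theorem le_card_filter_min_div_eq {n h b : ℕ} (hb : b < n / h) :
    h ≤ #{x ∈ range n | min (x / h) (n / h - 1) = b} := by
  have hbn : (b + 1) * h ≤ n := (Nat.mul_le_mul_right h hb).trans (Nat.div_mul_le_self n h)
  calc h = #(Ico (b * h) ((b + 1) * h)) := by
        rw [Nat.card_Ico, add_mul, one_mul, Nat.add_sub_cancel_left]
    _ ≤ _ := card_le_card fun x hx => by
      rw [mem_Ico] at hx
      refine mem_filter.mpr ⟨mem_range.mpr (by omega), ?_⟩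
      rw [Nat.div_eq_of_lt_le hx.1 hx.2]
      exact min_eq_left (by omega)

theorem pow_three_mul_sum_sq_le_sum_sum_near {n W : ℕ} (hW : 0 < W) (hWn : W ≤ n)
    (U : ℕ → ℝ) (hU : ∑ x ∈ range n, U x = 0) :
    (W : ℝ) ^ 3 * ∑ x ∈ range n, U x ^ 2
      ≤ 27 * n ^ 2 * ∑ x ∈ range n, ∑ y ∈ range n with x ≤ y + W ∧ y ≤ x + W,
          (U x - U y) ^ 2 := by
  -- `h = ⌈W / 3⌉`: points in the same or adjacent blocks are at distance at most `3 h - 2 ≤ W`.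
  set h := (W + 2) / 3
  have hh : 0 < h := by omega
  have hhn : h ≤ n := by omega
  set m := n / h
  set blk : ℕ → ℕ := fun x => min (x / h) (m - 1)
  have hblk : ∀ x ∈ range n, blk x < m :=
    fun x _ => (min_le_right _ _).trans_lt (by have := Nat.div_pos hhn hh; omega)
  have hnear : ∀ x ∈ range n, ∀ y ∈ range n, blk y = blk x ∨ blk y = blk x + 1 →
      x ≤ y + W ∧ y ≤ x + W := by
    intro x hx y hy hxy
    obtain ⟨hx1, hx2⟩ : blk x * h ≤ x ∧ x + 2 ≤ blk x * h + 2 * h :=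
      min_div_mul_le_and_add_two_le hh hhn (mem_range.mp hx)
    obtain ⟨hy1, hy2⟩ : blk y * h ≤ y ∧ y + 2 ≤ blk y * h + 2 * h :=
      min_div_mul_le_and_add_two_le hh hhn (mem_range.mp hy)
    rcases hxy with hxy | hxy <;> rw [hxy] at hy1 hy2
    · omega
    · rw [add_mul, one_mul] at hy1 hy2; omega
  have hblocks := sq_mul_sum_sq_le_of_blocks (range n) blk hblk
    (fun b hb => le_card_filter_min_div_eq hb) U hU
  have hmono : ∑ x ∈ range n, ∑ y ∈ range n with blk y = blk x ∨ blk y = blk x + 1, (U x - U y) ^ 2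
      ≤ ∑ x ∈ range n, ∑ y ∈ range n with x ≤ y + W ∧ y ≤ x + W, (U x - U y) ^ 2 :=
    sum_le_sum fun x hx => sum_le_sum_of_subset_of_nonneg
      (monotone_filter_right _ fun y hy => hnear x hx y hy) fun _ _ _ => sq_nonneg _
  have hmh : (m : ℝ) * h ≤ n := by exact_mod_cast Nat.div_mul_le_self n h
  have hWh : (W : ℝ) ≤ 3 * h := by exact_mod_cast (by omega : W ≤ 3 * h)
  rw [card_range] at hblocks
  calc (W : ℝ) ^ 3 * ∑ x ∈ range n, U x ^ 2 ≤ (3 * h) ^ 3 * ∑ x ∈ range n, U x ^ 2 := by gcongr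
    _ = 27 * h * (h ^ 2 * ∑ x ∈ range n, U x ^ 2) := by ring
    _ ≤ 27 * h * (n * m * ∑ x ∈ range n, ∑ y ∈ range n with x ≤ y + W ∧ y ≤ x + W,
          (U x - U y) ^ 2) :=
          mul_le_mul_of_nonneg_left (hblocks.trans (by gcongr)) (by positivity)
    _ = 27 * n * (m * h) * ∑ x ∈ range n, ∑ y ∈ range n with x ≤ y + W ∧ y ≤ x + W,
          (U x - U y) ^ 2 := by ring
    _ ≤ 27 * n * n * ∑ x ∈ range n, ∑ y ∈ range n with x ≤ y + W ∧ y ≤ x + W,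
          (U x - U y) ^ 2 := by gcongr
    _ = _ := by ring

theorem mul_sq_mul_sum_sq_le_sum_sum_mul_sq_sub {n W : ℕ} (hW : 0 < W) (hWn : W ≤ n) {a : ℝ}
    (ha : 0 ≤ a) (F : ℕ → ℕ → ℝ) (hF₀ : ∀ x y, 0 ≤ F x y)
    (hF : ∀ x < n, ∀ y < n, x ≤ y + W → y ≤ x + W → a / W ≤ F x y)
    (U : ℕ → ℝ) (hU : ∑ x ∈ range n, U x = 0) :
    a * W ^ 2 * ∑ x ∈ range n, U x ^ 2
      ≤ 27 * n ^ 2 * ∑ x ∈ range n, ∑ y ∈ range n, F x y * (U x - U y) ^ 2 := by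
  have hWR : (0 : ℝ) < W := by exact_mod_cast hW
  have hnear : a / W * ∑ x ∈ range n, ∑ y ∈ range n with x ≤ y + W ∧ y ≤ x + W, (U x - U y) ^ 2
      ≤ ∑ x ∈ range n, ∑ y ∈ range n, F x y * (U x - U y) ^ 2 := by
    rw [mul_sum]
    refine sum_le_sum fun x hx => ?_
    rw [mul_sum]
    calc ∑ y ∈ range n with x ≤ y + W ∧ y ≤ x + W, a / W * (U x - U y) ^ 2
        ≤ ∑ y ∈ range n with x ≤ y + W ∧ y ≤ x + W, F x y * (U x - U y) ^ 2 :=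
          sum_le_sum fun y hy => by
            rw [mem_filter, mem_range] at hy
            gcongr
            exact hF x (mem_range.mp hx) y hy.1 hy.2.1 hy.2.2
      _ ≤ ∑ y ∈ range n, F x y * (U x - U y) ^ 2 :=
          sum_le_sum_of_subset_of_nonneg (filter_subset _ _) fun y _ _ =>
            mul_nonneg (hF₀ x y) (sq_nonneg _)
  calc a * W ^ 2 * ∑ x ∈ range n, U x ^ 2 = a / W * (W ^ 3 * ∑ x ∈ range n, U x ^ 2) := by
        field_simp
    _ ≤ a / W * (27 * n ^ 2 * ∑ x ∈ range n,
          ∑ y ∈ range n with x ≤ y + W ∧ y ≤ x + W, (U x - U y) ^ 2) :=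
        mul_le_mul_of_nonneg_left (pow_three_mul_sum_sq_le_sum_sum_near hW hWn U hU) (by positivity)
    _ = 27 * n ^ 2 * (a / W * ∑ x ∈ range n,
          ∑ y ∈ range n with x ≤ y + W ∧ y ≤ x + W, (U x - U y) ^ 2) := by ring
    _ ≤ _ := by gcongr

namespace RBM

open Fin.CommRing

theorem rep_intCast {N : ℕ} [NeZero N] {d : ℤ} (h₁ : -N < 2 * d) (h₂ : 2 * d ≤ N) :
    rep (d : Fin N) = d := by
  have hval : ((d : Fin N).val : ℤ) = d % N := by
    rw [Fin.val_intCast, Int.toNat_of_nonneg (Int.emod_nonneg _ (by exact_mod_cast NeZero.ne N))]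
  have hmod : d % N = if 0 ≤ d then d else d + N := by
    split_ifs with hd
    · exact Int.emod_eq_of_lt hd (by omega)
    · rw [← Int.add_mul_emod_self_right d 1 N, one_mul]
      exact Int.emod_eq_of_lt (by omega) (by omega)
  unfold rep
  split_ifs at hmod ⊢ <;> omega

theorem intCast_rep {N : ℕ} [NeZero N] (i : Fin N) : ((rep i : ℤ) : Fin N) = i := by
  unfold rep
  split_ifs <;> simp

theorem zdist_le_iff {N : ℕ} (i : Fin N) {L : ℝ} (hL : 0 ≤ L) :
    zdist i ≤ L ↔ -⌊L⌋₊ ≤ rep i ∧ rep i ≤ ⌊L⌋₊ := by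
  rw [zdist, ← Int.cast_abs, ← Nat.cast_natAbs, ← Nat.le_floor_iff hL]
  omega

def toTorus {N : ℕ} [NeZero N] (K x : ℕ) : Fin N := (((x : ℤ) - K : ℤ) : Fin N)

theorem sum_filter_zdist_le_eq_sum_range {N : ℕ} [NeZero N] {L : ℝ} (hL : 0 ≤ L)
    (hLN : 2 * ⌊L⌋₊ < N) (g : Fin N → ℝ) :
    ∑ i ∈ univ.filter (fun i : Fin N => zdist i ≤ L), g i
      = ∑ x ∈ range (2 * ⌊L⌋₊ + 1), g (toTorus ⌊L⌋₊ x) := by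
  set K := ⌊L⌋₊
  have hrep : ∀ x < 2 * K + 1, rep (toTorus (N := N) K x) = x - K := fun x hx =>
    rep_intCast (by omega) (by omega)
  have hleft : ∀ i : Fin N, -(K : ℤ) ≤ rep i → toTorus K (rep i + K).toNat = i :=
    fun i hi => by rw [toTorus, Int.toNat_of_nonneg (by omega), add_sub_cancel_right, intCast_rep]
  refine sum_nbij' (fun i => (rep i + K).toNat) (toTorus K)
    (fun i hi => ?_) (fun x hx => ?_) (fun i hi => ?_) (fun x hx => ?_) (fun i hi => ?_)
  all_goals simp only [mem_filter, mem_univ, true_and, mem_range, zdist_le_iff _ hL] at *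
  · omega
  · rw [hrep x hx]; omega
  · exact hleft i hi.1
  · rw [hrep x hx]; omega
  · rw [hleft i hi.1]

theorem IsBandProfile.div_le_apply_toTorus_sub {N W : ℕ} [NeZero N] {cs Cs : ℝ}
    {f : Fin N → ℝ} (hf : IsBandProfile W cs Cs f) (hWN : 2 * W < N) (K : ℕ) {x y : ℕ}
    (h₁ : x ≤ y + W) (h₂ : y ≤ x + W) :
    cs / W ≤ f (toTorus K x - toTorus K y) := by
  rw [toTorus, toTorus, ← Int.cast_sub, show (x : ℤ) - K - (y - K) = x - y by ring]
  refine hf.lower _ ?_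
  rw [zdist, rep_intCast (d := (x : ℤ) - y) (by omega) (by omega)]
  have hxy : |(x : ℤ) - y| ≤ W := abs_le.mpr ⟨by omega, by omega⟩
  exact_mod_cast hxy

end RBM

theorem div_mul_rpow_neg_thirteen_le {ℓ W n cs D : ℝ} (hℓ : 1 ≤ ℓ) (hW : 1 ≤ W) (hcs : 0 ≤ cs)
    (hD : 0 ≤ D) (hn₀ : 0 ≤ n) (hn : n ≤ 2 * (ℓ ^ 4 * W) + 1)
    (hgap : cs * W ^ 2 ≤ 27 * n ^ 2 * D) :
    cs / 972 * ℓ ^ (-(13 : ℝ)) ≤ 1 / 4 * D := by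
  have hL : 1 ≤ ℓ ^ 4 * W := one_le_mul_of_one_le_of_one_le (one_le_pow₀ hℓ) hW
  have hn2 : n ^ 2 ≤ 9 * ℓ ^ 8 * W ^ 2 := by
    have := pow_le_pow_left₀ hn₀ (hn.trans (by linarith : _ ≤ 3 * (ℓ ^ 4 * W))) 2
    linarith
  have hcsD : cs ≤ 243 * ℓ ^ 8 * D := by
    refine le_of_mul_le_mul_right ?_ (by positivity : (0 : ℝ) < W ^ 2)
    nlinarith
  calc cs / 972 * ℓ ^ (-(13 : ℝ)) ≤ cs / 972 * ℓ ^ (-(8 : ℝ)) :=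
        mul_le_mul_of_nonneg_left (Real.rpow_le_rpow_of_exponent_le hℓ (by norm_num))
          (by positivity)
    _ = cs / (972 * ℓ ^ 8) := by
        rw [Real.rpow_neg (by positivity), show (8 : ℝ) = (8 : ℕ) by norm_num, Real.rpow_natCast]
        field_simp
    _ ≤ 1 / 4 * D := by
        rw [div_le_iff₀ (by positivity)]
        linarith

theorem band_dirichlet_spectral_gap_general
    (cs Cs : ℝ) (hcs : 0 < cs) :
    ∃ c > (0:ℝ), ∃ N₀ : ℕ, ∀ N : ℕ, N₀ ≤ N → ∀ W : ℕ, 0 < W →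
    2 * ((Real.log N) ^ 4 * W) < N →
    ∀ f : Fin N → ℝ, IsBandProfile W cs Cs f →
    ∀ u : Fin N → ℝ,
    (∑ i ∈ Finset.univ.filter (fun i : Fin N => zdist i ≤ (Real.log N) ^ 4 * W),
        (u i) ^ 2) = 1 →
    (∑ i ∈ Finset.univ.filter (fun i : Fin N => zdist i ≤ (Real.log N) ^ 4 * W), u i) = 0 →
    c * (Real.log N) ^ (-(13 : ℝ)) ≤
      (1 / 4) *
        ∑ i ∈ Finset.univ.filter (fun i : Fin N => zdist i ≤ (Real.log N) ^ 4 * W),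
          ∑ j ∈ Finset.univ.filter (fun j : Fin N => zdist j ≤ (Real.log N) ^ 4 * W),
            f (i - j) * (u i - u j) ^ 2 := by
  refine ⟨cs / 972, by positivity, 3, fun N hN W hW hWN f hf u hu₂ hu₁ => ?_⟩
  have : NeZero N := ⟨by omega⟩
  set ℓ := Real.log N
  have hℓ : 1 ≤ ℓ := by
    rw [Real.le_log_iff_exp_le (by positivity)]
    have h3 : (3 : ℝ) ≤ N := by exact_mod_cast hN
    linarith [Real.exp_one_lt_d9]
  have hL : 0 ≤ ℓ ^ 4 * W := by positivity
  set K := ⌊ℓ ^ 4 * W⌋₊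
  have hWK : W ≤ K := Nat.le_floor (le_mul_of_one_le_left (by positivity) (one_le_pow₀ hℓ))
  have hKL : (K : ℝ) ≤ ℓ ^ 4 * W := Nat.floor_le hL
  have hKN : 2 * K < N := by exact_mod_cast (by linarith : (2 * K : ℝ) < N)
  simp only [sum_filter_zdist_le_eq_sum_range hL hKN] at hu₂ hu₁ ⊢
  have hgap := mul_sq_mul_sum_sq_le_sum_sum_mul_sq_sub hW (by omega : W ≤ 2 * K + 1) hcs.le
    (fun x y => f (toTorus K x - toTorus K y)) (fun _ _ => hf.nonneg _)
    (fun x _ y _ h₁ h₂ => hf.div_le_apply_toTorus_sub (by omega) K h₁ h₂)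
    (fun x => u (toTorus K x)) hu₁
  rw [hu₂, mul_one] at hgap
  refine div_mul_rpow_neg_thirteen_le hℓ (by exact_mod_cast hW) hcs.le
    (sum_nonneg fun _ _ => sum_nonneg fun _ _ => mul_nonneg (hf.nonneg _) (sq_nonneg _))
    (by positivity) ?_ hgap
  push_cast
  linarith

/-- **Spectral gap for the band Dirichlet form** (Lemma 4.6): for
`𝕋 = [-(log N)⁴ W, (log N)⁴ W] ∩ ℤ` and any unit vector `u ∈ L²(𝕋)` orthogonal to the
constants, `(1/4) ∑_{i,j ∈ 𝕋} s_{ij} (u_i - u_j)² ≥ c (log N)^{-13}`. -/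
theorem band_dirichlet_spectral_gap
    (cs Cs : ℝ) (hcs : 0 < cs) (hCs : 0 < Cs) :
    ∃ c > (0:ℝ), ∃ N₀ : ℕ, ∀ N : ℕ, N₀ ≤ N → ∀ W : ℕ, 0 < W →
    2 * ((Real.log N) ^ 4 * W) < N →
    ∀ f : Fin N → ℝ, IsBandProfile W cs Cs f →
    ∀ u : Fin N → ℝ,
    (∑ i ∈ Finset.univ.filter (fun i : Fin N => zdist i ≤ (Real.log N) ^ 4 * W),
        (u i) ^ 2) = 1 →
    (∑ i ∈ Finset.univ.filter (fun i : Fin N => zdist i ≤ (Real.log N) ^ 4 * W), u i) = 0 →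
    c * (Real.log N) ^ (-(13 : ℝ)) ≤
      (1 / 4) *
        ∑ i ∈ Finset.univ.filter (fun i : Fin N => zdist i ≤ (Real.log N) ^ 4 * W),
          ∑ j ∈ Finset.univ.filter (fun j : Fin N => zdist j ≤ (Real.log N) ^ 4 * W),
            f (i - j) * (u i - u j) ^ 2 :=
  band_dirichlet_spectral_gap_general cs Cs hcs
end
end
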